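/- Let B = !![a, b; c, d] ∈ SL₂(ℤ), φ = (φ₁, φ₂) ∈ ℝ², and r, s, p, q ∈ ℤ. Set X = u(2πφ₁), Y = u(2πφ₂), T = j in the unit quaternions. Then X^{ra+sb} · Y^{rc+sd} · T · X^{−r} · Y^{−s} · T⁻¹ = u(2π·(((a+1)r + bs)φ₁ + (cr + (d+1)s)φ₂)), i.e. the image of the meridian word μ = x^{ra+sb} y^{rc+sd} τ x^{−r} y^{−s} τ⁻¹ under ρ_φ equals u(2π·α_φ) with α_φ = φ(B+I)·(r,s)ᵀ; moreover Xᵖ Yᵠ = u(2π(pφ₁ + qφ₂)), i.e. the image of the longitude word λ = xᵖyᵠ equals u(2π·β_φ) with β_φ = pφ₁ + qφ₂. -/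

import Mathlib

open Real

/-- The unit quaternion `cos θ + (sin θ) i`. -/
noncomputable def uq (θ : ℝ) : Quaternion ℝ := ⟨Real.cos θ, Real.sin θ, 0, 0⟩

/-- The quaternion unit `j`. -/
def jq : Quaternion ℝ := ⟨0, 0, 1, 0⟩

lemma uq_mul (θ₁ θ₂ : ℝ) : uq θ₁ * uq θ₂ = uq (θ₁ + θ₂) := by
  ext <;> simp only [Quaternion.re_mul, Quaternion.imI_mul, Quaternion.imJ_mul, Quaternion.imK_mul] <;>
    simp [uq, Real.cos_add, Real.sin_add] <;> ring

lemma uq_zero : uq 0 = 1 := by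
  ext <;> simp [uq, Quaternion.re_one, Quaternion.imI_one, Quaternion.imJ_one, Quaternion.imK_one]

lemma uq_inv (θ : ℝ) : (uq θ)⁻¹ = uq (-θ) := by
  refine inv_eq_of_mul_eq_one_right ?_
  rw [uq_mul]; simp [uq_zero]

lemma uq_pow (θ : ℝ) (n : ℕ) : uq θ ^ n = uq (n * θ) := by
  induction n with
  | zero => simp [uq_zero]
  | succ k ih => rw [pow_succ, ih, uq_mul]; push_cast; ring_nf

lemma uq_zpow (θ : ℝ) (n : ℤ) : uq θ ^ n = uq (n * θ) := by
  cases n with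
  | ofNat k => rw [Int.ofNat_eq_coe, zpow_natCast, uq_pow]; norm_num
  | negSucc k =>
      rw [zpow_negSucc, uq_pow, uq_inv]
      congr 1
      push_cast
      ring

lemma jq_inv : jq⁻¹ = -jq := by
  refine inv_eq_of_mul_eq_one_right ?_
  ext <;> simp only [Quaternion.re_mul, Quaternion.imI_mul, Quaternion.imJ_mul, Quaternion.imK_mul,
    Quaternion.re_neg, Quaternion.imI_neg, Quaternion.imJ_neg, Quaternion.imK_neg] <;>
    simp [jq, Quaternion.re_one, Quaternion.imI_one, Quaternion.imJ_one, Quaternion.imK_one]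

lemma jq_conj (θ : ℝ) : jq * uq θ * jq⁻¹ = uq (-θ) := by
  rw [jq_inv]
  ext <;> simp only [Quaternion.re_mul, Quaternion.imI_mul, Quaternion.imJ_mul, Quaternion.imK_mul,
    Quaternion.re_neg, Quaternion.imI_neg, Quaternion.imJ_neg, Quaternion.imK_neg] <;>
    simp [jq, uq]

/-- with `X = u(2πφ₁)`, `Y = u(2πφ₂)`, `T = j`, the image of the meridian
word `μ = x^{ra+sb} y^{rc+sd} τ x^{-r} y^{-s} τ⁻¹` under `ρ_φ` is `u(2π α_φ)` with
`α_φ = φ(B+I)·(r,s)ᵀ`, and the image of the longitude word `λ = xᵖ yᵠ` is `u(2π β_φ)`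
with `β_φ = pφ₁ + qφ₂`. -/
theorem meridian_longitude_images (a b c d : ℤ)
    (hdet : (!![a, b; c, d] : Matrix (Fin 2) (Fin 2) ℤ).det = 1)
    (φ₁ φ₂ : ℝ) (r s p q : ℤ) :
    uq (2 * π * φ₁) ^ (r * a + s * b) * uq (2 * π * φ₂) ^ (r * c + s * d) * jq *
        uq (2 * π * φ₁) ^ (-r) * uq (2 * π * φ₂) ^ (-s) * jq⁻¹ =
      uq (2 * π * ((((a : ℝ) + 1) * r + (b : ℝ) * s) * φ₁ +
        ((c : ℝ) * r + ((d : ℝ) + 1) * s) * φ₂)) ∧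
    uq (2 * π * φ₁) ^ p * uq (2 * π * φ₂) ^ q =
      uq (2 * π * ((p : ℝ) * φ₁ + (q : ℝ) * φ₂)) := by
  constructor
  · rw [uq_zpow, uq_zpow, uq_zpow, uq_zpow]
    have h : uq ((r * a + s * b : ℤ) * (2 * π * φ₁)) * uq ((r * c + s * d : ℤ) * (2 * π * φ₂)) *
        jq * uq ((-r : ℤ) * (2 * π * φ₁)) * uq ((-s : ℤ) * (2 * π * φ₂)) * jq⁻¹ =
        uq ((r * a + s * b : ℤ) * (2 * π * φ₁) + (r * c + s * d : ℤ) * (2 * π * φ₂)) *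
        (jq * uq ((-r : ℤ) * (2 * π * φ₁) + (-s : ℤ) * (2 * π * φ₂)) * jq⁻¹) := by
      rw [uq_mul, mul_assoc _ (uq _) (uq _), uq_mul, mul_assoc (uq _) jq,
        mul_assoc (uq _) (jq * _), mul_assoc jq]
    rw [h, jq_conj, uq_mul]
    congr 1
    push_cast
    ring
  · rw [uq_zpow, uq_zpow, uq_mul]
    congr 1
    push_cast
    ring
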